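/- (Ben-David et al. bound) For every hypothesis h ∈ H and every h* ∈ H, R_T(h) ≤ R_S(h) + d_{HΔH}(p_S, p_T) + R_S(h*) + R_T(h*), where d_{HΔH}(p_S, p_T) = sup_{h, h' ∈ H} |R_S(h, h') − R_T(h, h')|; equivalently, R_T(h) ≤ R_S(h) + d_{HΔH}(p_S, p_T) + λ_H with λ_H = inf_{h' ∈ H} [R_S(h') + R_T(h')]. -/

import Mathlib

open MeasureTheory

/-- Zero-one disagreement risk between two hypotheses under distribution `p`. -/
noncomputable def risk {X : Type*} [MeasurableSpace X] (p : Measure X)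
    (h h' : X → Bool) : ℝ :=
  ∫ x, (if h x = h' x then (0 : ℝ) else 1) ∂p

section aux
variable {X : Type*} [MeasurableSpace X] (p : Measure X) [IsProbabilityMeasure p]

lemma risk_integrable (h h' : X → Bool) (hm : Measurable h) (hm' : Measurable h') :
    Integrable (fun x => (if h x = h' x then (0 : ℝ) else 1)) p := by
  have hmeas : Measurable (fun x => (if h x = h' x then (0 : ℝ) else 1)) := by
    refine Measurable.ite ?_ measurable_const measurable_const
    exact measurableSet_eq_fun hm hm'
  refine Integrable.mono' (integrable_const (1:ℝ)) hmeas.aestronglyMeasurable ?_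
  filter_upwards with x
  dsimp; split <;> simp

lemma risk_nonneg (h h' : X → Bool) : 0 ≤ risk p h h' := by
  apply integral_nonneg; intro x; dsimp; split <;> norm_num

lemma risk_le_one (h h' : X → Bool) (hm : Measurable h) (hm' : Measurable h') :
    risk p h h' ≤ 1 := by
  have := integral_mono (risk_integrable p h h' hm hm') (integrable_const (1:ℝ))
    (fun x => by dsimp; split <;> norm_num)
  simpa [risk] using this

lemma risk_comm (h h' : X → Bool) : risk p h h' = risk p h' h := by
  unfold risk; congr 1; ext x; simp [eq_comm]

lemma risk_triangle (h h' h'' : X → Bool) (hm : Measurable h) (hm' : Measurable h')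
    (hm'' : Measurable h'') :
    risk p h h'' ≤ risk p h h' + risk p h' h'' := by
  unfold risk
  rw [← integral_add (risk_integrable p h h' hm hm') (risk_integrable p h' h'' hm' hm'')]
  refine integral_mono (risk_integrable p h h'' hm hm'')
    ((risk_integrable p h h' hm hm').add (risk_integrable p h' h'' hm' hm'')) ?_
  intro x
  dsimp
  by_cases h1 : h x = h' x <;> by_cases h2 : h' x = h'' x <;>
    simp [h1, h2] <;> split <;> norm_num

end aux

/-- Ben-David et al.'s bound, with `λ_H` replaced by `R_S(h*) + R_T(h*)` for every `h* ∈ H`. -/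
theorem ben_david_bound {X : Type*} [MeasurableSpace X]
    (pS pT : Measure X) [IsProbabilityMeasure pS] [IsProbabilityMeasure pT]
    (htrue : X → Bool) (hmtrue : Measurable htrue)
    (H : Set (X → Bool)) (hne : H.Nonempty)
    (hHm : ∀ h ∈ H, Measurable h)
    (h : X → Bool) (hh : h ∈ H)
    (hstar : X → Bool) (hhstar : hstar ∈ H) :
    risk pT h htrue ≤
      risk pS h htrue +
      (⨆ h₁ : H, ⨆ h₂ : H,
        |risk pS (h₁ : X → Bool) (h₂ : X → Bool) -
          risk pT (h₁ : X → Bool) (h₂ : X → Bool)|) +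
      (risk pS hstar htrue + risk pT hstar htrue) := by
  have hmh := hHm h hh
  have hms := hHm hstar hhstar
  have habs : ∀ h₁ h₂ : X → Bool, Measurable h₁ → Measurable h₂ →
      |risk pS h₁ h₂ - risk pT h₁ h₂| ≤ 1 := by
    intro h₁ h₂ m1 m2
    rw [abs_le]
    constructor <;> nlinarith [risk_nonneg pS h₁ h₂, risk_nonneg pT h₁ h₂,
      risk_le_one pS h₁ h₂ m1 m2, risk_le_one pT h₁ h₂ m1 m2]
  haveI : Nonempty H := hne.to_subtype
  have hbdd_inner : ∀ h₁ : H, BddAbove (Set.range fun h₂ : H =>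
      |risk pS (h₁ : X → Bool) h₂ - risk pT (h₁ : X → Bool) h₂|) := by
    intro h₁
    refine ⟨1, ?_⟩
    rintro _ ⟨h₂, rfl⟩
    exact habs _ _ (hHm _ h₁.2) (hHm _ h₂.2)
  have hbdd_outer : BddAbove (Set.range fun h₁ : H => ⨆ h₂ : H,
      |risk pS (h₁ : X → Bool) h₂ - risk pT (h₁ : X → Bool) h₂|) := by
    refine ⟨1, ?_⟩
    rintro _ ⟨h₁, rfl⟩
    exact ciSup_le fun h₂ => habs _ _ (hHm _ h₁.2) (hHm _ h₂.2)
  have hsup : |risk pS h hstar - risk pT h hstar| ≤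
      ⨆ h₁ : H, ⨆ h₂ : H, |risk pS (h₁ : X → Bool) h₂ - risk pT (h₁ : X → Bool) h₂| := by
    refine le_trans ?_ (le_ciSup hbdd_outer ⟨h, hh⟩)
    exact le_ciSup (hbdd_inner ⟨h, hh⟩) ⟨hstar, hhstar⟩
  have t1 : risk pT h htrue ≤ risk pT h hstar + risk pT hstar htrue :=
    risk_triangle pT h hstar htrue hmh hms hmtrue
  have t2 : risk pT h hstar ≤ risk pS h hstar + |risk pS h hstar - risk pT h hstar| := by
    have := abs_sub_abs_le_abs_sub (risk pS h hstar) (risk pT h hstar)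
    have h1 := le_abs_self (risk pT h hstar - risk pS h hstar)
    rw [abs_sub_comm] at h1
    linarith
  have t3 : risk pS h hstar ≤ risk pS h htrue + risk pS hstar htrue := by
    have := risk_triangle pS h htrue hstar hmh hmtrue hms
    have hc := risk_comm pS htrue hstar
    linarith
  linarith
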